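/- With the setup of the canal surface X(u,v) = γ(u) + r(u)(M₂(u) cos v + M₃(u) sin v) along a unit-speed curve with orthonormal parallel transport frame, the coefficients of the first fundamental form are E = f² + r'², F = 0, G = r², where f = 1 − k₂ r cos v − k₃ r sin v. -/

import Mathlib

/-!
Because the frame is parallel, `M₂' = -k₂ T` and `M₃' = -k₃ T` are tangential, so both partial
derivatives have explicit coordinates in the orthonormal triple `T, M₂, M₃`:
`X_u = f T + r' cos v M₂ + r' sin v M₃` and `X_v = -r sin v M₂ + r cos v M₃`.
The coefficients `E, F, G` are then dot products of coordinate vectors.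
-/

open Real InnerProductSpace

section CanalSurface

variable {E : Type*}

theorem inner_smul_add_smul_add_smul_of_orthonormal [NormedAddCommGroup E]
    [InnerProductSpace ℝ E] {x y z : E} (hx : ‖x‖ = 1) (hy : ‖y‖ = 1) (hz : ‖z‖ = 1)
    (hxy : ⟪x, y⟫_ℝ = 0) (hxz : ⟪x, z⟫_ℝ = 0) (hyz : ⟪y, z⟫_ℝ = 0) (a b c a' b' c' : ℝ) :
    ⟪a • x + b • y + c • z, a' • x + b' • y + c' • z⟫_ℝ = a * a' + b * b' + c * c' := by
  have hyx : ⟪y, x⟫_ℝ = 0 := by rw [real_inner_comm, hxy]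
  have hzx : ⟪z, x⟫_ℝ = 0 := by rw [real_inner_comm, hxz]
  have hzy : ⟪z, y⟫_ℝ = 0 := by rw [real_inner_comm, hyz]
  simp only [inner_add_left, inner_add_right, real_inner_smul_left, real_inner_smul_right,
    real_inner_self_eq_norm_sq, hx, hy, hz, hxy, hxz, hyz, hyx, hzx, hzy]
  ring

variable [NormedAddCommGroup E] [NormedSpace ℝ E]

noncomputable def canalSurface (γ M₂ M₃ : ℝ → E) (r : ℝ → ℝ) (u v : ℝ) : E :=
  γ u + r u • (cos v • M₂ u + sin v • M₃ u)

theorem hasDerivAt_canalSurface_left {γ T M₂ M₃ : ℝ → E} {k₂ k₃ r : ℝ → ℝ} {r' u : ℝ}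
    (hγ : HasDerivAt γ (T u) u) (hM₂ : HasDerivAt M₂ (-(k₂ u) • T u) u)
    (hM₃ : HasDerivAt M₃ (-(k₃ u) • T u) u) (hr : HasDerivAt r r' u) (v : ℝ) :
    HasDerivAt (fun t => canalSurface γ M₂ M₃ r t v)
      ((1 - k₂ u * r u * cos v - k₃ u * r u * sin v) • T u + (r' * cos v) • M₂ u +
        (r' * sin v) • M₃ u) u := by
  refine (hγ.add (hr.smul ((hM₂.const_smul (cos v)).add (hM₃.const_smul (sin v))))).congr_deriv ?_
  simp only [Pi.add_apply, Pi.smul_apply]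
  module

theorem hasDerivAt_canalSurface_right (γ M₂ M₃ : ℝ → E) (r : ℝ → ℝ) (u v : ℝ) :
    HasDerivAt (fun w => canalSurface γ M₂ M₃ r u w)
      ((-(r u * sin v)) • M₂ u + (r u * cos v) • M₃ u) v := by
  refine ((((hasDerivAt_cos v).smul_const (M₂ u)).add
    ((hasDerivAt_sin v).smul_const (M₃ u))).const_smul (r u) |>.const_add (γ u)).congr_deriv ?_
  module

end CanalSurface

theorem stmt_3_general (γ T M₁ M₂ M₃ : ℝ → EuclideanSpace ℝ (Fin 4))
    (k₂ k₃ r r' : ℝ → ℝ)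
    (horth : ∀ u, ‖T u‖ = 1 ∧ ‖M₁ u‖ = 1 ∧ ‖M₂ u‖ = 1 ∧ ‖M₃ u‖ = 1 ∧
      ⟪T u, M₁ u⟫_ℝ = 0 ∧ ⟪T u, M₂ u⟫_ℝ = 0 ∧ ⟪T u, M₃ u⟫_ℝ = 0 ∧
      ⟪M₁ u, M₂ u⟫_ℝ = 0 ∧ ⟪M₁ u, M₃ u⟫_ℝ = 0 ∧ ⟪M₂ u, M₃ u⟫_ℝ = 0)
    (hγ : ∀ u, HasDerivAt γ (T u) u)
    (hM₂ : ∀ u, HasDerivAt M₂ (-(k₂ u) • T u) u)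
    (hM₃ : ∀ u, HasDerivAt M₃ (-(k₃ u) • T u) u)
    (hr : ∀ u, HasDerivAt r (r' u) u)
    (X : ℝ → ℝ → EuclideanSpace ℝ (Fin 4))
    (hX : ∀ u v, X u v = γ u + r u • (cos v • M₂ u + sin v • M₃ u))
    (Xu Xv : ℝ → ℝ → EuclideanSpace ℝ (Fin 4))
    (hXu : ∀ u v, HasDerivAt (fun t => X t v) (Xu u v) u)
    (hXv : ∀ u v, HasDerivAt (fun w => X u w) (Xv u v) v)
    (f : ℝ → ℝ → ℝ)
    (hf : ∀ u v, f u v = 1 - k₂ u * r u * cos v - k₃ u * r u * sin v) :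
    ∀ u v, ⟪Xu u v, Xu u v⟫_ℝ = f u v ^ 2 + r' u ^ 2 ∧
      ⟪Xu u v, Xv u v⟫_ℝ = 0 ∧
      ⟪Xv u v, Xv u v⟫_ℝ = r u ^ 2 := by
  obtain rfl : X = canalSurface γ M₂ M₃ r := funext fun u => funext (hX u)
  intro u v
  obtain ⟨hT, -, hM₂₁, hM₃₁, -, hTM₂, hTM₃, -, -, hM₂M₃⟩ := horth u
  have hXu' : Xu u v = f u v • T u + (r' u * cos v) • M₂ u + (r' u * sin v) • M₃ u := by
    rw [hf]
    exact (hXu u v).unique (hasDerivAt_canalSurface_left (hγ u) (hM₂ u) (hM₃ u) (hr u) v)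
  have hXv' : Xv u v = (0 : ℝ) • T u + (-(r u * sin v)) • M₂ u + (r u * cos v) • M₃ u := by
    rw [zero_smul, zero_add]
    exact (hXv u v).unique (hasDerivAt_canalSurface_right γ M₂ M₃ r u v)
  simp only [hXu', hXv',
    inner_smul_add_smul_add_smul_of_orthonormal hT hM₂₁ hM₃₁ hTM₂ hTM₃ hM₂M₃]
  refine ⟨?_, ?_, ?_⟩
  · linear_combination r' u ^ 2 * sin_sq_add_cos_sq v
  · ring
  · linear_combination r u ^ 2 * sin_sq_add_cos_sq v

/-- First fundamental form of the canal surface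
`X(u,v) = γ(u) + r(u)(cos v • M₂(u) + sin v • M₃(u))` along a unit-speed curve with
orthonormal parallel transport frame: `E = f² + r'²`, `F = 0`, `G = r²`, where
`f = 1 - k₂ r cos v - k₃ r sin v`. -/
theorem stmt_3 (γ T M₁ M₂ M₃ : ℝ → EuclideanSpace ℝ (Fin 4))
    (k₁ k₂ k₃ r r' : ℝ → ℝ)
    (horth : ∀ u, ‖T u‖ = 1 ∧ ‖M₁ u‖ = 1 ∧ ‖M₂ u‖ = 1 ∧ ‖M₃ u‖ = 1 ∧
      ⟪T u, M₁ u⟫_ℝ = 0 ∧ ⟪T u, M₂ u⟫_ℝ = 0 ∧ ⟪T u, M₃ u⟫_ℝ = 0 ∧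
      ⟪M₁ u, M₂ u⟫_ℝ = 0 ∧ ⟪M₁ u, M₃ u⟫_ℝ = 0 ∧ ⟪M₂ u, M₃ u⟫_ℝ = 0)
    (hγ : ∀ u, HasDerivAt γ (T u) u)
    (hT : ∀ u, HasDerivAt T (k₁ u • M₁ u + k₂ u • M₂ u + k₃ u • M₃ u) u)
    (hM₁ : ∀ u, HasDerivAt M₁ (-(k₁ u) • T u) u)
    (hM₂ : ∀ u, HasDerivAt M₂ (-(k₂ u) • T u) u)
    (hM₃ : ∀ u, HasDerivAt M₃ (-(k₃ u) • T u) u)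
    (hr : ∀ u, HasDerivAt r (r' u) u)
    (X : ℝ → ℝ → EuclideanSpace ℝ (Fin 4))
    (hX : ∀ u v, X u v = γ u + r u • (cos v • M₂ u + sin v • M₃ u))
    (Xu Xv : ℝ → ℝ → EuclideanSpace ℝ (Fin 4))
    (hXu : ∀ u v, HasDerivAt (fun t => X t v) (Xu u v) u)
    (hXv : ∀ u v, HasDerivAt (fun w => X u w) (Xv u v) v)
    (f : ℝ → ℝ → ℝ)
    (hf : ∀ u v, f u v = 1 - k₂ u * r u * cos v - k₃ u * r u * sin v) :
    ∀ u v, ⟪Xu u v, Xu u v⟫_ℝ = f u v ^ 2 + r' u ^ 2 ∧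
      ⟪Xu u v, Xv u v⟫_ℝ = 0 ∧
      ⟪Xv u v, Xv u v⟫_ℝ = r u ^ 2 :=
  stmt_3_general γ T M₁ M₂ M₃ k₂ k₃ r r' horth hγ hM₂ hM₃ hr X hX Xu Xv hXu hXv f hf
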